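/- Let M ≥ 1 and let χ : (-∞,0] → (-∞,0] be an increasing, concave function with χ(0) = 0 which is differentiable on (-∞,0) and satisfies |t·χ′(t)| ≤ M·|χ(t)| for all t < 0. Then the derivative of χ satisfies the doubling estimate χ′(-2s) ≤ M·2^{M-1}·χ′(-s) for every s > 0. -/

import Mathlib

/-!
Put `g t = -χ (-t)` for `t > 0`, so that `g' t = χ' (-t)`. The growth condition becomes
`t * g' t ≤ M * g t`, i.e. `g t * t ^ (-M)` is decreasing, whence `g (2 * s) ≤ 2 ^ M * g s`.
Concavity and `χ 0 = 0` give `g t ≤ t * g' t`, and chaining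
`2 * s * g' (2 * s) ≤ M * g (2 * s) ≤ M * 2 ^ M * g s ≤ M * 2 ^ M * s * g' s` gives the estimate.
-/

open Set

theorem antitoneOn_mul_rpow_neg_of_mul_deriv_le {g g' : ℝ → ℝ} {M : ℝ}
    (hg : ∀ t, 0 < t → HasDerivAt g (g' t) t) (hle : ∀ t, 0 < t → t * g' t ≤ M * g t) :
    AntitoneOn (fun t => g t * t ^ (-M)) (Ioi 0) := by
  have hderiv : ∀ t ∈ Ioi (0 : ℝ),
      HasDerivAt (fun t => g t * t ^ (-M)) (g' t * t ^ (-M) + g t * (-M * t ^ (-M - 1))) t :=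
    fun t ht => (hg t ht).mul (Real.hasDerivAt_rpow_const (Or.inl (ne_of_gt ht)))
  refine antitoneOn_of_hasDerivWithinAt_nonpos (convex_Ioi 0)
    (fun t ht => (hderiv t ht).continuousAt.continuousWithinAt)
    (fun t ht => (hderiv t (interior_subset ht)).hasDerivWithinAt) fun t ht => ?_
  rw [interior_Ioi] at ht
  have ht : 0 < t := ht
  calc g' t * t ^ (-M) + g t * (-M * t ^ (-M - 1))
      = (t * g' t - M * g t) * t ^ (-M - 1) := by
        rw [Real.rpow_sub_one ht.ne']; field_simp; ring
    _ ≤ 0 := mul_nonpos_of_nonpos_of_nonneg (by linarith [hle t ht]) (by positivity)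

theorem le_rpow_mul_of_mul_deriv_le {g g' : ℝ → ℝ} {M c s : ℝ}
    (hg : ∀ t, 0 < t → HasDerivAt g (g' t) t) (hle : ∀ t, 0 < t → t * g' t ≤ M * g t)
    (hc : 1 ≤ c) (hs : 0 < s) :
    g (c * s) ≤ c ^ M * g s := by
  have hcs : 0 < c * s := by positivity
  have hanti : g (c * s) * (c * s) ^ (-M) ≤ g s * s ^ (-M) :=
    antitoneOn_mul_rpow_neg_of_mul_deriv_le hg hle hs hcs (le_mul_of_one_le_left hs.le hc)
  rw [Real.rpow_neg hcs.le, Real.rpow_neg hs.le, ← div_eq_mul_inv, ← div_eq_mul_inv,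
    div_le_iff₀ (by positivity), Real.mul_rpow (by linarith) hs.le] at hanti
  calc g (c * s) ≤ g s / s ^ M * (c ^ M * s ^ M) := hanti
    _ = c ^ M * g s := by field_simp [(Real.rpow_pos_of_pos hs M).ne']

theorem ConcaveOn.sub_le_mul_of_hasDerivAt {S : Set ℝ} {f : ℝ → ℝ} {f' x y : ℝ}
    (hf : ConcaveOn ℝ S f) (hx : x ∈ S) (hy : y ∈ S) (hxy : x < y) (hd : HasDerivAt f f' x) :
    f y - f x ≤ (y - x) * f' := by
  have := hf.slope_le_of_hasDerivAt hx hy hxy hd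
  rwa [slope_def_field, div_le_iff₀ (sub_pos.2 hxy), mul_comm] at this

theorem doubling_estimate_of_WMplus_general (M : ℝ) (hM : 1 ≤ M) (χ χ' : ℝ → ℝ)
    (hconc : ConcaveOn ℝ (Set.Iic (0 : ℝ)) χ)
    (hneg : ∀ t : ℝ, t ≤ 0 → χ t ≤ 0)
    (hχ0 : χ 0 = 0)
    (hderiv : ∀ t : ℝ, t < 0 → HasDerivAt χ (χ' t) t)
    (hsub : ∀ t : ℝ, t < 0 → |t * χ' t| ≤ M * |χ t|) :
    ∀ s : ℝ, 0 < s → χ' (-(2 * s)) ≤ M * (2 : ℝ) ^ (M - 1) * χ' (-s) := by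
  intro s hs
  have hg_deriv : ∀ t, 0 < t → HasDerivAt (fun t => -χ (-t)) (χ' (-t)) t := fun t ht => by
    simpa using ((hderiv (-t) (by linarith)).comp t (hasDerivAt_neg t)).fun_neg
  have hg_le : ∀ t, 0 < t → -χ (-t) ≤ t * χ' (-t) := fun t ht => by
    simpa [hχ0] using hconc.sub_le_mul_of_hasDerivAt (show -t ∈ Iic 0 by simp [ht.le])
      self_mem_Iic (by linarith) (hderiv (-t) (by linarith))
  have hg_growth : ∀ t, 0 < t → t * χ' (-t) ≤ M * -χ (-t) := fun t ht => by
    have hχ_nonpos := hneg (-t) (by linarith)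
    have hχ'_nonneg : 0 ≤ χ' (-t) := by nlinarith [hg_le t ht]
    simpa [abs_of_nonpos hχ_nonpos, abs_of_nonneg hχ'_nonneg, ht.le, abs_of_pos ht]
      using hsub (-t) (by linarith)
  have hdouble : -χ (-(2 * s)) ≤ 2 ^ M * -χ (-s) :=
    le_rpow_mul_of_mul_deriv_le hg_deriv hg_growth one_le_two hs
  have h2pow : (2 : ℝ) ^ M = 2 * 2 ^ (M - 1) := by
    rw [Real.rpow_sub two_pos, Real.rpow_one]; ring
  have key : 2 * s * χ' (-(2 * s)) ≤ 2 * s * (M * 2 ^ (M - 1) * χ' (-s)) :=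
    calc 2 * s * χ' (-(2 * s)) ≤ M * -χ (-(2 * s)) := hg_growth (2 * s) (by positivity)
      _ ≤ M * (2 ^ M * (s * χ' (-s))) := by
        gcongr
        exact hdouble.trans (by gcongr; exact hg_le s hs)
      _ = 2 * s * (M * 2 ^ (M - 1) * χ' (-s)) := by rw [h2pow]; ring
  exact le_of_mul_le_mul_left key (by positivity)

/-- Doubling estimate for the derivative of a concave weight in the class `W_M^+`:
if `χ : (-∞,0] → (-∞,0]` is increasing, concave, `χ 0 = 0`, differentiable on `(-∞,0)`
with `|t * χ' t| ≤ M * |χ t|` for `t < 0` (where `M ≥ 1`), then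
`χ'(-2s) ≤ M * 2 ^ (M - 1) * χ'(-s)` for all `s > 0`. -/
theorem doubling_estimate_of_WMplus (M : ℝ) (hM : 1 ≤ M) (χ χ' : ℝ → ℝ)
    (hmono : MonotoneOn χ (Set.Iic (0 : ℝ)))
    (hconc : ConcaveOn ℝ (Set.Iic (0 : ℝ)) χ)
    (hneg : ∀ t : ℝ, t ≤ 0 → χ t ≤ 0)
    (hχ0 : χ 0 = 0)
    (hderiv : ∀ t : ℝ, t < 0 → HasDerivAt χ (χ' t) t)
    (hsub : ∀ t : ℝ, t < 0 → |t * χ' t| ≤ M * |χ t|) :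
    ∀ s : ℝ, 0 < s → χ' (-(2 * s)) ≤ M * (2 : ℝ) ^ (M - 1) * χ' (-s) :=
  doubling_estimate_of_WMplus_general M hM χ χ' hconc hneg hχ0 hderiv hsub
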